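/- Let R, V, R̃, Ṽ be continuous on [0,π] with R(x) ≠ 0 a.e. on (0,π). Suppose φ = φ̃ on [0,π] × ℂ and η = η̃ on [0,π] × ℂ, where η, η̃ satisfy i·η'(x,λ) − R(x)∫_x^π V(t)η(t,λ)dt + R(x) = λη(x,λ) and i·η̃'(x,λ) − R̃(x)∫_x^π Ṽ(t)η̃(t,λ)dt + R̃(x) = λη̃(x,λ), both with η(π,λ) = η̃(π,λ) = 0. If additionally η(x,λ) → 0 and ∫_x^π V(t)η(t,λ)dt → 0 and ∫_x^π Ṽ(t)η(t,λ)dt → 0 as Im λ → +∞ (pointwise in x), then R(x) = R̃(x) for all x ∈ [0,π]. -/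
import Mathlib

open Real MeasureTheory intervalIntegral Set Filter Topology

/-- Final step of Theorem 1: equality of the solutions `φ, η` for the two
    problems together with the decay of the integral terms as `Im λ → +∞`
    forces `R = R̃` on `[0,π]`. -/
theorem stmt_13 (R V Rt Vt : ℝ → ℂ) (φ φt η ηt : ℝ → ℂ → ℂ)
    (hR : ContinuousOn R (Icc 0 π)) (hV : ContinuousOn V (Icc 0 π))
    (hRt : ContinuousOn Rt (Icc 0 π)) (hVt : ContinuousOn Vt (Icc 0 π))
    (hRne : ∀ᵐ x ∂(volume.restrict (Ioo (0:ℝ) π)), R x ≠ 0)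
    (hφ : ∀ (x : ℝ) (l : ℂ), φ x l = φt x l)
    (hη : ∀ (x : ℝ) (l : ℂ), η x l = ηt x l)
    (heq : ∀ l : ℂ, ∀ x ∈ Icc (0:ℝ) π,
      Complex.I * deriv (fun y => η y l) x
        - R x * (∫ t in x..π, V t * η t l) + R x = l * η x l)
    (heqt : ∀ l : ℂ, ∀ x ∈ Icc (0:ℝ) π,
      Complex.I * deriv (fun y => ηt y l) x
        - Rt x * (∫ t in x..π, Vt t * ηt t l) + Rt x = l * ηt x l)
    (hbc : ∀ l : ℂ, η π l = 0) (hbct : ∀ l : ℂ, ηt π l = 0)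
    (hdec1 : ∀ x ∈ Icc (0:ℝ) π,
      Tendsto (fun l : ℂ => η x l) (Filter.comap Complex.im Filter.atTop) (nhds 0))
    (hdec2 : ∀ x ∈ Icc (0:ℝ) π,
      Tendsto (fun l : ℂ => ∫ t in x..π, V t * η t l)
        (Filter.comap Complex.im Filter.atTop) (nhds 0))
    (hdec3 : ∀ x ∈ Icc (0:ℝ) π,
      Tendsto (fun l : ℂ => ∫ t in x..π, Vt t * η t l)
        (Filter.comap Complex.im Filter.atTop) (nhds 0)) :
    ∀ x ∈ Icc (0:ℝ) π, R x = Rt x := by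
  intro x hx
  have hηt : ηt = η := by
    funext y l; exact (hη y l).symm
  subst hηt
  -- For each l, R x - Rt x = R x * ∫ - Rt x * ∫
  have key : ∀ l : ℂ, R x - Rt x =
      R x * (∫ t in x..π, V t * ηt t l) - Rt x * (∫ t in x..π, Vt t * ηt t l) := by
    intro l
    have h1 := heq l x hx
    have h2 := heqt l x hx
    have := h1.trans h2.symm
    linear_combination this
  haveI : (Filter.comap Complex.im Filter.atTop).NeBot :=
    Filter.comap_neBot (fun t ht => by
      obtain ⟨a, ha⟩ := Filter.mem_atTop_sets.mp ht
      exact ⟨⟨0, a⟩, ha a le_rfl⟩)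
  have h0 : Tendsto (fun l : ℂ => R x * (∫ t in x..π, V t * ηt t l)
      - Rt x * (∫ t in x..π, Vt t * ηt t l))
      (Filter.comap Complex.im Filter.atTop) (nhds 0) := by
    have := ((hdec2 x hx).const_mul (R x)).sub ((hdec3 x hx).const_mul (Rt x))
    simpa using this
  have hconst : Tendsto (fun _ : ℂ => R x - Rt x)
      (Filter.comap Complex.im Filter.atTop) (nhds (R x - Rt x)) := tendsto_const_nhds
  have h : R x - Rt x = 0 :=
    tendsto_nhds_unique (hconst.congr (fun l => key l)) h0
  exact sub_eq_zero.mp h
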